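/- For every positive integer M there exists a solvable MPP instance such that every solution attaining the minimum makespan over all solutions has total arrival time at least M greater than the minimum total arrival time over all solutions; hence the gap between the two points of the Pareto front for the pair (total arrival time, makespan) can be made arbitrarily large. -/

import Mathlib

/-!
Formalization of multi-robot path planning on graphs (MPP).

An MPP instance consists of a connected simple graph `G` on a vertex type `V`,
a finite set of robots (an index type `R`), and injective start/goal
configurations `xI xG : R → V`.  A scheduled path is a map `ℕ → V`.
-/

namespace MPPFormal

variable {V R : Type}

/-- The arrival time of a path `p` with goal `g`: the smallest time `t`
with `p t = g`. -/
noncomputable def arrivalTime (g : V) (p : ℕ → V) : ℕ := sInf {t | p t = g}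

/-- A feasible scheduled path from `s` to `g` in the graph `G`:
it starts at `s`, reaches `g` at some time, stays at `g` forever after the
first time it reaches `g`, and at every time step it either traverses an
edge of `G` or stays put. -/
def FeasiblePath (G : SimpleGraph V) (s g : V) (p : ℕ → V) : Prop :=
  p 0 = s ∧ (∃ t, p t = g) ∧ (∀ t, arrivalTime g p ≤ t → p t = g) ∧
    ∀ t, G.Adj (p t) (p (t + 1)) ∨ p t = p (t + 1)

/-- Two scheduled paths collide if they meet at the same vertex at the same
time, or if they swap along an edge head-on. -/
def Collide (p q : ℕ → V) : Prop :=
  (∃ t, p t = q t) ∨ ∃ t, p t = q (t + 1) ∧ p (t + 1) = q t ∧ p t ≠ p (t + 1)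

/-- The length of a scheduled path: the number of time steps at which it
actually moves. -/
noncomputable def pathLen (p : ℕ → V) : ℕ := Set.ncard {t | p t ≠ p (t + 1)}

/-- A solution to the MPP instance `(G, R, xI, xG)`: a family of pairwise
non-colliding feasible paths, one per robot. -/
def IsSolution (G : SimpleGraph V) (xI xG : R → V) (p : R → ℕ → V) : Prop :=
  (∀ i, FeasiblePath G (xI i) (xG i) (p i)) ∧
    Pairwise fun i j => ¬ Collide (p i) (p j)

/-- `(G, xI, xG)` together with the robot index type `R` forms an MPP
instance: the graph is connected and the start and goal configurations are
injective. -/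
def IsMPPInstance (G : SimpleGraph V) (xI xG : R → V) : Prop :=
  G.Connected ∧ Function.Injective xI ∧ Function.Injective xG

variable [Fintype R]

/-- Total arrival time of a solution. -/
noncomputable def totalTime (xG : R → V) (p : R → ℕ → V) : ℕ :=
  ∑ i, arrivalTime (xG i) (p i)

/-- Makespan (last arrival time) of a solution. -/
noncomputable def makespan (xG : R → V) (p : R → ℕ → V) : ℕ :=
  Finset.univ.sup fun i => arrivalTime (xG i) (p i)

/-- Total distance traveled in a solution. -/
noncomputable def totalDist (p : R → ℕ → V) : ℕ := ∑ i, pathLen (p i)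

/-- Maximum single-robot distance of a solution. -/
noncomputable def maxDist (p : R → ℕ → V) : ℕ :=
  Finset.univ.sup fun i => pathLen (p i)

/-- Minimum total arrival time over all solutions. -/
noncomputable def minTotalTime (G : SimpleGraph V) (xI xG : R → V) : ℕ :=
  sInf {c | ∃ p, IsSolution G xI xG p ∧ totalTime xG p = c}

/-- Minimum makespan over all solutions. -/
noncomputable def minMakespan (G : SimpleGraph V) (xI xG : R → V) : ℕ :=
  sInf {c | ∃ p, IsSolution G xI xG p ∧ makespan xG p = c}

/-- Minimum total distance over all solutions. -/
noncomputable def minTotalDist (G : SimpleGraph V) (xI xG : R → V) : ℕ :=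
  sInf {c | ∃ p, IsSolution G xI xG p ∧ totalDist p = c}

/-- Minimum maximum distance over all solutions. -/
noncomputable def minMaxDist (G : SimpleGraph V) (xI xG : R → V) : ℕ :=
  sInf {c | ∃ p, IsSolution G xI xG p ∧ maxDist p = c}

end MPPFormal

namespace MPPFormal

/-!
On the ladder `ℕ × Bool` (two rails joined by rungs), robot 0 runs from `(0, false)` to
`(m + 2, false)` and robot 1 starts on the rung above its goal `(m + 1, false)`. The height
`i + b` of `(i, b)` grows by at most one per step, so robot 0 needs time `m + 2`, and if it
arrives that early it climbs the height at unit speed and must stand on `(m + 1, false)` at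
time `m + 1`; robot 1 therefore arrives at time `m + 2` at the earliest, and every
makespan-optimal solution has total arrival time at least `2m + 4`. If instead robot 1 moves
at once and robot 0 detours over the upper rail, the total arrival time is `m + 5`.
-/

variable {V : Type} {G : SimpleGraph V} {s g : V} {p q : ℕ → V}

theorem arrivalTime_eq_of_first {T : ℕ} (hT : p T = g) (hlt : ∀ t < T, p t ≠ g) :
    arrivalTime g p = T :=
  le_antisymm (Nat.sInf_le hT)
    (not_lt.1 fun h => hlt _ h (Nat.sInf_mem (s := {t | p t = g}) ⟨T, hT⟩))

theorem FeasiblePath.apply_zero (hp : FeasiblePath G s g p) : p 0 = s := hp.1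

theorem FeasiblePath.apply_of_arrivalTime_le (hp : FeasiblePath G s g p) {t : ℕ}
    (ht : arrivalTime g p ≤ t) : p t = g :=
  hp.2.2.1 t ht

theorem FeasiblePath.step (hp : FeasiblePath G s g p) (t : ℕ) :
    G.Adj (p t) (p (t + 1)) ∨ p t = p (t + 1) :=
  hp.2.2.2 t

theorem FeasiblePath.apply_arrivalTime (hp : FeasiblePath G s g p) :
    p (arrivalTime g p) = g :=
  Nat.sInf_mem hp.2.1

theorem feasiblePath_of_first {T : ℕ} (h0 : p 0 = s) (hT : ∀ t, T ≤ t → p t = g)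
    (hlt : ∀ t < T, p t ≠ g) (hstep : ∀ t, G.Adj (p t) (p (t + 1)) ∨ p t = p (t + 1)) :
    FeasiblePath G s g p ∧ arrivalTime g p = T := by
  have harr := arrivalTime_eq_of_first (hT T le_rfl) hlt
  exact ⟨⟨h0, ⟨T, hT T le_rfl⟩, by rwa [harr], hstep⟩, harr⟩

def waitThenStep (b c : V) (d t : ℕ) : V := if t ≤ d then b else c

theorem feasiblePath_waitThenStep {b c : V} (hbc : G.Adj b c) (d : ℕ) :
    FeasiblePath G b c (waitThenStep b c d) ∧ arrivalTime c (waitThenStep b c d) = d + 1 := by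
  refine feasiblePath_of_first (by simp [waitThenStep]) (fun t ht => ?_) (fun t ht => ?_)
    (fun t => ?_)
  · simp [waitThenStep, show ¬ t ≤ d by omega]
  · simpa [waitThenStep, show t ≤ d by omega] using hbc.ne
  · unfold waitThenStep
    split_ifs <;> first | exact Or.inr rfl | exact Or.inl hbc | omega

section Potential

variable {φ : V → ℕ} (hφ : ∀ ⦃u v⦄, G.Adj u v → φ v ≤ φ u + 1)
include hφ

theorem potential_le_add (hstep : ∀ t, G.Adj (p t) (p (t + 1)) ∨ p t = p (t + 1)) (t d : ℕ) :
    φ (p (t + d)) ≤ φ (p t) + d := by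
  induction d with
  | zero => simp
  | succ d ih =>
    rw [← add_assoc]
    rcases hstep (t + d) with h | h
    · have := hφ h
      omega
    · rw [← h]
      omega

theorem FeasiblePath.potential_le_add_arrivalTime (hp : FeasiblePath G s g p) :
    φ g ≤ φ s + arrivalTime g p := by
  simpa [hp.apply_zero, hp.apply_arrivalTime] using potential_le_add hφ hp.step 0 (arrivalTime g p)

theorem FeasiblePath.potential_eq_of_tight (hp : FeasiblePath G s g p)
    (htight : φ g = φ s + arrivalTime g p) {t : ℕ} (ht : t ≤ arrivalTime g p) :
    φ (p t) = φ s + t := by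
  have hbefore := potential_le_add hφ hp.step 0 t
  have hafter := potential_le_add hφ hp.step t (arrivalTime g p - t)
  rw [Nat.add_sub_cancel' ht, hp.apply_arrivalTime] at hafter
  rw [zero_add, hp.apply_zero] at hbefore
  omega

end Potential

theorem Collide.symm (h : Collide p q) : Collide q p := by
  rcases h with ⟨t, h⟩ | ⟨t, h₁, h₂, h₃⟩
  · exact Or.inl ⟨t, h.symm⟩
  · exact Or.inr ⟨t, h₂.symm, h₁.symm, h₂ ▸ h₁ ▸ h₃.symm⟩

theorem FeasiblePath.lt_arrivalTime_of_not_collide (hq : FeasiblePath G s g q)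
    (hpq : ¬ Collide p q) {t : ℕ} (ht : p t = g) : t < arrivalTime g q :=
  not_le.1 fun h => hpq (Or.inl ⟨t, ht.trans (hq.apply_of_arrivalTime_le h).symm⟩)

theorem isSolution_fin_two {xI xG : Fin 2 → V} {p : Fin 2 → ℕ → V} :
    IsSolution G xI xG p ↔ FeasiblePath G (xI 0) (xG 0) (p 0) ∧
      FeasiblePath G (xI 1) (xG 1) (p 1) ∧ ¬ Collide (p 0) (p 1) := by
  simp only [IsSolution, Pairwise, Fin.forall_fin_two]
  constructor
  · rintro ⟨⟨h₀, h₁⟩, ⟨-, h₀₁⟩, -⟩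
    exact ⟨h₀, h₁, h₀₁ Fin.zero_ne_one⟩
  · rintro ⟨h₀, h₁, h₀₁⟩
    exact ⟨⟨h₀, h₁⟩, ⟨absurd rfl, fun _ => h₀₁⟩,
      fun _ h => h₀₁ h.symm, absurd rfl⟩

section Objectives

variable {R : Type} [Fintype R] {xI xG : R → V} {P : R → ℕ → V}

theorem arrivalTime_le_makespan (i : R) : arrivalTime (xG i) (P i) ≤ makespan xG P :=
  Finset.le_sup (f := fun i => arrivalTime (xG i) (P i)) (Finset.mem_univ i)

theorem makespan_le_iff {n : ℕ} :
    makespan xG P ≤ n ↔ ∀ i, arrivalTime (xG i) (P i) ≤ n := by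
  simp [makespan]

theorem minMakespan_le (hP : IsSolution G xI xG P) : minMakespan G xI xG ≤ makespan xG P :=
  Nat.sInf_le ⟨P, hP, rfl⟩

theorem minTotalTime_le (hP : IsSolution G xI xG P) : minTotalTime G xI xG ≤ totalTime xG P :=
  Nat.sInf_le ⟨P, hP, rfl⟩

end Objectives

open SimpleGraph

abbrev ladder : SimpleGraph (ℕ × Bool) := hasse ℕ □ ⊤

def height (v : ℕ × Bool) : ℕ := v.1 + v.2.toNat

theorem ladder_connected : ladder.Connected :=
  Connected.boxProd ⟨hasse_preconnected_of_succ ℕ⟩ connected_top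

theorem height_le_of_ladder_adj ⦃u v : ℕ × Bool⦄ (h : ladder.Adj u v) :
    height v ≤ height u + 1 := by
  obtain ⟨i, a⟩ := u
  obtain ⟨j, b⟩ := v
  simp only [boxProd_adj, hasse_adj, Nat.covBy_iff_add_one_eq, top_adj] at h
  cases a <;> cases b <;> simp [height] at h ⊢ <;> omega

theorem eq_of_ladder_adj_of_height_le {u : ℕ × Bool} {j : ℕ}
    (h : ladder.Adj u (j + 1, false)) (hu : height u ≤ j) : u = (j, false) := by
  obtain ⟨i, a⟩ := u
  simp only [boxProd_adj, hasse_adj, Nat.covBy_iff_add_one_eq, top_adj] at h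
  cases a <;> simp [height] at h hu ⊢ <;> omega

section Instance

variable (m : ℕ)

def ladderStart : Fin 2 → ℕ × Bool := ![(0, false), (m + 1, true)]

def ladderGoal : Fin 2 → ℕ × Bool := ![(m + 2, false), (m + 1, false)]

theorem isMPPInstance_ladder : IsMPPInstance ladder (ladderStart m) (ladderGoal m) :=
  ⟨ladder_connected, injective_pair_iff_ne.2 (by simp), injective_pair_iff_ne.2 (by simp)⟩

def railPath (t : ℕ) : ℕ × Bool := (min t (m + 2), false)

def detourPath (t : ℕ) : ℕ × Bool :=
  if t ≤ m then (t, false) else if t ≤ m + 3 then (t - 1, true) else (m + 2, false)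

theorem feasiblePath_railPath :
    FeasiblePath ladder (0, false) (m + 2, false) (railPath m) ∧
      arrivalTime (m + 2, false) (railPath m) = m + 2 := by
  refine feasiblePath_of_first (by simp [railPath]) (fun t ht => ?_) (fun t ht => ?_)
    (fun t => ?_)
  all_goals simp [railPath]
  all_goals omega

theorem feasiblePath_detourPath :
    FeasiblePath ladder (0, false) (m + 2, false) (detourPath m) ∧
      arrivalTime (m + 2, false) (detourPath m) = m + 4 := by
  refine feasiblePath_of_first (by simp [detourPath]) (fun t ht => ?_) (fun t ht => ?_)
    (fun t => ?_)
  all_goals unfold detourPath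
  all_goals split_ifs <;> simp <;> omega

theorem ladder_adj_rung (i : ℕ) : ladder.Adj (i, true) (i, false) := by
  simp

def railSolution : Fin 2 → ℕ → ℕ × Bool :=
  ![railPath m, waitThenStep (m + 1, true) (m + 1, false) (m + 1)]

def detourSolution : Fin 2 → ℕ → ℕ × Bool :=
  ![detourPath m, waitThenStep (m + 1, true) (m + 1, false) 0]

theorem isSolution_railSolution :
    IsSolution ladder (ladderStart m) (ladderGoal m) (railSolution m) := by
  refine isSolution_fin_two.2 ⟨(feasiblePath_railPath m).1,
    (feasiblePath_waitThenStep (ladder_adj_rung _) _).1, ?_⟩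
  rintro (⟨t, h⟩ | ⟨t, h₁, h₂, -⟩) <;>
    simp only [railSolution, railPath, waitThenStep, Matrix.cons_val_zero,
      Matrix.cons_val_one] at * <;>
    split_ifs at * <;> simp at * <;> omega

theorem isSolution_detourSolution :
    IsSolution ladder (ladderStart m) (ladderGoal m) (detourSolution m) := by
  refine isSolution_fin_two.2 ⟨(feasiblePath_detourPath m).1,
    (feasiblePath_waitThenStep (ladder_adj_rung _) _).1, ?_⟩
  rintro (⟨t, h⟩ | ⟨t, h₁, -⟩) <;>
    simp only [detourSolution, detourPath, waitThenStep, Matrix.cons_val_zero,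
      Matrix.cons_val_one] at * <;>
    split_ifs at * <;> simp at * <;> omega

theorem makespan_railSolution_le : makespan (ladderGoal m) (railSolution m) ≤ m + 2 := by
  simp [makespan_le_iff, Fin.forall_fin_two, ladderGoal, railSolution,
    (feasiblePath_railPath m).2, (feasiblePath_waitThenStep (ladder_adj_rung (m + 1)) _).2]

theorem totalTime_detourSolution : totalTime (ladderGoal m) (detourSolution m) = m + 5 := by
  simp [totalTime, Fin.sum_univ_two, ladderGoal, detourSolution,
    (feasiblePath_detourPath m).2, (feasiblePath_waitThenStep (ladder_adj_rung (m + 1)) _).2]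

theorem ladder_apply_eq_of_arrivalTime_le {p : ℕ → ℕ × Bool}
    (hp : FeasiblePath ladder (0, false) (m + 2, false) p)
    (hfast : arrivalTime (m + 2, false) p ≤ m + 2) : p (m + 1) = (m + 1, false) := by
  have hslow := hp.potential_le_add_arrivalTime height_le_of_ladder_adj
  simp only [height, Bool.toNat_false] at hslow
  have harr : arrivalTime (m + 2, false) p = m + 2 := by omega
  have hmid : height (p (m + 1)) = m + 1 := by
    simpa [height] using hp.potential_eq_of_tight height_le_of_ladder_adj
      (by simp [height, harr]) (t := m + 1) (by omega)
  have hgoal : p (m + 1 + 1) = (m + 2, false) := by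
    rw [← hp.apply_arrivalTime, harr]
  rcases hp.step (m + 1) with hadj | heq
  · rw [hgoal] at hadj
    exact eq_of_ladder_adj_of_height_le hadj hmid.le
  · rw [heq, hgoal] at hmid
    simp [height] at hmid

theorem two_mul_le_totalTime_of_makespan_eq_minMakespan {P : Fin 2 → ℕ → ℕ × Bool}
    (hP : IsSolution ladder (ladderStart m) (ladderGoal m) P)
    (hopt : makespan (ladderGoal m) P = minMakespan ladder (ladderStart m) (ladderGoal m)) :
    2 * (m + 2) ≤ totalTime (ladderGoal m) P := by
  obtain ⟨h₀, h₁, hcol⟩ := isSolution_fin_two.1 hP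
  have hfast : arrivalTime (ladderGoal m 0) (P 0) ≤ m + 2 := calc
    _ ≤ makespan (ladderGoal m) P := arrivalTime_le_makespan 0
    _ = minMakespan ladder (ladderStart m) (ladderGoal m) := hopt
    _ ≤ makespan (ladderGoal m) (railSolution m) := minMakespan_le (isSolution_railSolution m)
    _ ≤ m + 2 := makespan_railSolution_le m
  simp only [ladderStart, ladderGoal, Matrix.cons_val_zero, Matrix.cons_val_one] at h₀ h₁ hfast
  have hblocked := h₁.lt_arrivalTime_of_not_collide hcol
    (ladder_apply_eq_of_arrivalTime_le m h₀ hfast)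
  have hslow := h₀.potential_le_add_arrivalTime height_le_of_ladder_adj
  simp only [height, Bool.toNat_false] at hslow
  simp only [totalTime, Fin.sum_univ_two, ladderGoal, Matrix.cons_val_zero, Matrix.cons_val_one]
  omega

end Instance

/-- For every positive integer `M` there exists a solvable MPP instance such
that every solution attaining the minimum makespan has total arrival time at
least `M` greater than the minimum total arrival time: the gap between the
two extreme points of the Pareto front for the pair
(total arrival time, makespan) can be made arbitrarily large. -/
theorem pareto_gap_totalTime_makespan :
    ∀ M : ℕ, 0 < M →
      ∃ (k : ℕ) (V : Type) (G : SimpleGraph V) (xI xG : Fin k → V),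
        IsMPPInstance G xI xG ∧ (∃ p, IsSolution G xI xG p) ∧
        ∀ p, IsSolution G xI xG p → makespan xG p = minMakespan G xI xG →
          minTotalTime G xI xG + M ≤ totalTime xG p := by
  intro M _
  refine ⟨2, ℕ × Bool, ladder, ladderStart (M + 1), ladderGoal (M + 1),
    isMPPInstance_ladder _, ⟨_, isSolution_railSolution _⟩, fun P hP hopt => ?_⟩
  have hmin := minTotalTime_le (isSolution_detourSolution (M + 1))
  rw [totalTime_detourSolution] at hmin
  have hopt_total := two_mul_le_totalTime_of_makespan_eq_minMakespan _ hP hopt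
  omega

end MPPFormal
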